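/- arXiv:2305.16704 — 2 statements merged into one kernel-verified Lean document; each statement's English description precedes it below -/
import Mathlib

section
/- Let X = [[1, 0], [0, 0]] (a 2 × 2 real matrix) and let Σ be a 2 × 2 positive definite real matrix with Σ⁻¹ = [[a, b], [b, c]] (so c > 0 and ac − b² > 0). Then lim_{σ → 0} (XᵀX + σ²Σ⁻¹)⁻¹ Xᵀ = [[1, 0], [−b/c, 0]]. Moreover, the Moore–Penrose pseudoinverse of X is X⁺ = [[1, 0], [0, 0]], so whenever b ≠ 0 the limit does not equal X⁺. -/
open Matrix Filter Topology

/-- For `X = [[1,0],[0,0]]` and `Σ` positive definite with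
`Σ⁻¹ = [[a,b],[b,c]]` (so `c > 0` and `ac − b² > 0`),
`lim_{σ → 0} (XᵀX + σ²Σ⁻¹)⁻¹ Xᵀ = [[1,0],[−b/c,0]]`; moreover the Moore–Penrose
pseudoinverse of `X` is `X⁺ = [[1,0],[0,0]]` (it satisfies the four Penrose conditions), so
whenever `b ≠ 0` the limit differs from `X⁺`. -/
theorem ridge_limit_example {a b c : ℝ}
    (S : Matrix (Fin 2) (Fin 2) ℝ) (hS : S.PosDef)
    (hSinv : S⁻¹ = !![a, b; b, c]) (hc : 0 < c) (hdet : 0 < a * c - b ^ 2) :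
    Tendsto
        (fun σ : ℝ =>
          ((!![1, 0; 0, 0] : Matrix (Fin 2) (Fin 2) ℝ)ᵀ * !![1, 0; 0, 0] + σ ^ 2 • S⁻¹)⁻¹
            * (!![1, 0; 0, 0] : Matrix (Fin 2) (Fin 2) ℝ)ᵀ)
        (𝓝[≠] 0) (𝓝 !![1, 0; -b / c, 0]) ∧
    ((!![1, 0; 0, 0] : Matrix (Fin 2) (Fin 2) ℝ) * !![1, 0; 0, 0] * !![1, 0; 0, 0]
        = !![1, 0; 0, 0] ∧
      (!![1, 0; 0, 0] : Matrix (Fin 2) (Fin 2) ℝ) * !![1, 0; 0, 0] * !![1, 0; 0, 0]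
        = !![1, 0; 0, 0] ∧
      ((!![1, 0; 0, 0] : Matrix (Fin 2) (Fin 2) ℝ) * !![1, 0; 0, 0])ᵀ
        = !![1, 0; 0, 0] * !![1, 0; 0, 0] ∧
      ((!![1, 0; 0, 0] : Matrix (Fin 2) (Fin 2) ℝ) * !![1, 0; 0, 0])ᵀ
        = !![1, 0; 0, 0] * !![1, 0; 0, 0]) ∧
    (b ≠ 0 → (!![1, 0; -b / c, 0] : Matrix (Fin 2) (Fin 2) ℝ) ≠ !![1, 0; 0, 0]) := by
  set d : ℝ := a * c - b ^ 2 with hd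
  refine ⟨?_, ⟨?_, ?_, ?_, ?_⟩, ?_⟩
  · -- main limit
    set f : ℝ → Matrix (Fin 2) (Fin 2) ℝ :=
      fun σ => !![c / (c + σ ^ 2 * d), 0; -b / (c + σ ^ 2 * d), 0] with hf
    have hpos : ∀ σ : ℝ, 0 < c + σ ^ 2 * d := by
      intro σ
      have : 0 ≤ σ ^ 2 * d := mul_nonneg (sq_nonneg σ) hdet.le
      linarith
    have htend : Tendsto f (𝓝 0) (𝓝 !![1, 0; -b / c, 0]) := by
      have hden : Tendsto (fun σ : ℝ => c + σ ^ 2 * d) (𝓝 0) (𝓝 c) := by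
        have : Tendsto (fun σ : ℝ => c + σ ^ 2 * d) (𝓝 0) (𝓝 (c + 0 ^ 2 * d)) := by
          apply Continuous.tendsto; continuity
        simpa using this
      refine tendsto_pi_nhds.mpr ?_
      intro i
      rw [tendsto_pi_nhds]
      intro j
      fin_cases i <;> fin_cases j <;> simp [hf]
      · have : Tendsto (fun σ : ℝ => c / (c + σ ^ 2 * d)) (𝓝 0) (𝓝 (c / c)) :=
          tendsto_const_nhds.div hden hc.ne'
        simpa [div_self hc.ne'] using this
      · exact tendsto_const_nhds.div hden hc.ne'
    refine (htend.mono_left nhdsWithin_le_nhds).congr' ?_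
    filter_upwards [self_mem_nhdsWithin] with σ (hσ : σ ≠ 0)
    have hσ2 : (0:ℝ) < σ ^ 2 := by positivity
    -- the matrix M
    have hM : (!![1, 0; 0, 0] : Matrix (Fin 2) (Fin 2) ℝ)ᵀ * !![1, 0; 0, 0] + σ ^ 2 • S⁻¹
        = !![1 + σ ^ 2 * a, σ ^ 2 * b; σ ^ 2 * b, σ ^ 2 * c] := by
      rw [hSinv]
      ext i j
      fin_cases i <;> fin_cases j <;> simp [Matrix.mul_apply, Fin.sum_univ_two]
    set D : ℝ := σ ^ 2 * (c + σ ^ 2 * d) with hD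
    have hDpos : 0 < D := mul_pos hσ2 (hpos σ)
    set g : Matrix (Fin 2) (Fin 2) ℝ :=
      !![σ ^ 2 * c / D, -(σ ^ 2 * b) / D; -(σ ^ 2 * b) / D, (1 + σ ^ 2 * a) / D] with hg
    have hinv : (!![1 + σ ^ 2 * a, σ ^ 2 * b; σ ^ 2 * b, σ ^ 2 * c] : Matrix (Fin 2) (Fin 2) ℝ)⁻¹ = g := by
      apply Matrix.inv_eq_right_inv
      ext i j
      fin_cases i <;> fin_cases j <;>
        simp [hg, Matrix.mul_apply, Fin.sum_univ_two] <;>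
        field_simp <;> ring_nf <;> rw [hD, hd] <;> ring
    rw [hM, hinv]
    have hXt : (!![1, 0; 0, 0] : Matrix (Fin 2) (Fin 2) ℝ)ᵀ = !![1, 0; 0, 0] := by
      ext i j; fin_cases i <;> fin_cases j <;> simp
    rw [hXt]
    have h1 : (c + σ ^ 2 * d) ≠ 0 := (hpos σ).ne'
    have h2 : (σ ^ 2 : ℝ) ≠ 0 := hσ2.ne'
    ext i j
    fin_cases i <;> fin_cases j <;>
      simp [hg, hf, hD, Matrix.mul_apply, Fin.sum_univ_two] <;>
      field_simp <;> ring
  · ext i j; fin_cases i <;> fin_cases j <;> simp [Matrix.mul_apply, Fin.sum_univ_two]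
  · ext i j; fin_cases i <;> fin_cases j <;> simp [Matrix.mul_apply, Fin.sum_univ_two]
  · ext i j; fin_cases i <;> fin_cases j <;> simp [Matrix.mul_apply, Fin.sum_univ_two]
  · ext i j; fin_cases i <;> fin_cases j <;> simp [Matrix.mul_apply, Fin.sum_univ_two]
  · intro hb h
    have := congrFun (congrFun h 1) 0
    simp [div_eq_zero_iff, hb, hc.ne'] at this
end

section
/- Fix j ≥ 2 and consider constrained models of the form M(p_j) = x_jᵀ m(X_j) y_j, where X_j ∈ ℝ^{(j−1)×d} stacks the inputs x₁,…,x_{j−1}, y_j ∈ ℝ^{j−1} stacks the labels y₁,…,y_{j−1}, and m maps X_j measurably to a d × (j−1) real matrix. Suppose the inputs x₁,…,x_j are random with some joint distribution, the noise variables ε₁,…,ε_j are i.i.d. mean-zero with variance σ², independent of the inputs and of β, and yᵢ = βᵀxᵢ + εᵢ. Let β⁽¹⁾ and β⁽²⁾ be two random vectors in ℝᵈ, each independent of the inputs and the noise, having the same mean and the same covariance matrix. Then for every such constrained model M, the risk E[(M(p_j) − y_j)²] computed with β = β⁽¹⁾ equals the risk computed with β = β⁽²⁾. In particular, the risk of a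 constrained model depends on the distribution of β only through its mean and covariance. -/
open MeasureTheory Matrix ProbabilityTheory

instance {m n α : Type*} [MeasurableSpace α] : MeasurableSpace (Matrix m n α) :=
  inferInstanceAs (MeasurableSpace (m → n → α))

lemma my_measurable_dotProduct {α : Type*} [MeasurableSpace α] {k : ℕ} {u v : α → Fin k → ℝ}
    (hu : Measurable u) (hv : Measurable v) : Measurable fun a => u a ⬝ᵥ v a := by
  simp only [dotProduct]
  exact Finset.measurable_sum _ fun i _ => (hu.eval.mul hv.eval)

lemma quad_integral {d : ℕ} (μ : Measure (Fin d → ℝ)) [IsProbabilityMeasure μ]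
    (hmom : ∀ i j, Integrable (fun v => v i * v j) μ)
    (w : Fin d → ℝ) (c : ℝ) :
    ∫ v, (w ⬝ᵥ v + c) ^ 2 ∂μ
      = (∑ i, ∑ j, w i * w j * ∫ v, v i * v j ∂μ)
        + 2 * c * (∑ i, w i * ∫ v, v i ∂μ) + c ^ 2 := by
  have h1 : ∀ i, Integrable (fun v : Fin d → ℝ => v i) μ := by
    intro i
    have h2 : Integrable (fun v : Fin d → ℝ => (v i) ^ 2) μ := by
      simpa [sq] using hmom i i
    exact ((memLp_two_iff_integrable_sq
      (measurable_pi_apply i).aestronglyMeasurable).mpr h2).integrable one_le_two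
  have key : ∀ v : Fin d → ℝ, (w ⬝ᵥ v + c) ^ 2
      = (∑ i, ∑ j, (w i * w j) * (v i * v j)) + ((∑ i, (2 * c * w i) * v i) + c ^ 2) := by
    intro v
    simp only [dotProduct]
    rw [add_sq, sq, Finset.sum_mul_sum]
    have A : ∑ i, ∑ j, (w i * v i) * (w j * v j) = ∑ i, ∑ j, (w i * w j) * (v i * v j) :=
      Finset.sum_congr rfl fun i _ => Finset.sum_congr rfl fun j _ => by ring
    have B : 2 * (∑ i, w i * v i) * c = ∑ i, (2 * c * w i) * v i := by
      rw [Finset.mul_sum, Finset.sum_mul]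
      exact Finset.sum_congr rfl fun i _ => by ring
    rw [A, B, add_assoc]
  have I2 : Integrable (fun v => ∑ i, ∑ j, (w i * w j) * (v i * v j)) μ :=
    integrable_finset_sum _ fun i _ => integrable_finset_sum _ fun j _ => (hmom i j).const_mul _
  have I1 : Integrable (fun v => ∑ i, (2 * c * w i) * v i) μ :=
    integrable_finset_sum _ fun i _ => (h1 i).const_mul _
  have Ic : Integrable (fun v => (∑ i, (2 * c * w i) * v i) + c ^ 2) μ :=
    I1.add (integrable_const _)
  have e2 : (∫ v, ∑ i, ∑ j, (w i * w j) * (v i * v j) ∂μ)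
      = ∑ i, ∑ j, w i * w j * ∫ v, v i * v j ∂μ := by
    rw [integral_finset_sum _ (fun i _ => integrable_finset_sum _ fun j _ => (hmom i j).const_mul _)]
    refine Finset.sum_congr rfl fun i _ => ?_
    rw [integral_finset_sum _ (fun j _ => (hmom i j).const_mul _)]
    exact Finset.sum_congr rfl fun j _ => integral_const_mul _ _
  have e1 : (∫ v, ∑ i, (2 * c * w i) * v i ∂μ) = 2 * c * ∑ i, w i * ∫ v, v i ∂μ := by
    rw [integral_finset_sum _ (fun i _ => (h1 i).const_mul _), Finset.mul_sum]
    refine Finset.sum_congr rfl fun i _ => ?_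
    rw [integral_const_mul]; ring
  calc ∫ v, (w ⬝ᵥ v + c) ^ 2 ∂μ
      = ∫ v, ((∑ i, ∑ j, (w i * w j) * (v i * v j)) + ((∑ i, (2 * c * w i) * v i) + c ^ 2)) ∂μ :=
        integral_congr_ae (Filter.Eventually.of_forall fun v => key v)
    _ = _ := by
        rw [integral_add I2 Ic, integral_add I1 (integrable_const _), integral_const, e1, e2]
        simp [add_assoc]

lemma risk_formula {Ω : Type*} [MeasurableSpace Ω] (P : Measure Ω) [IsProbabilityMeasure P]
    {d n : ℕ}
    (Z : Ω → ((Fin n → Fin d → ℝ) × (Fin d → ℝ)) × (Fin (n + 1) → ℝ)) (hZ : Measurable Z)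
    (m : Matrix (Fin n) (Fin d) ℝ → Matrix (Fin d) (Fin n) ℝ) (hm : Measurable m)
    (β : Ω → Fin d → ℝ) (hβ : Measurable β) (hind : IndepFun β Z P)
    (hmom : ∀ i j, Integrable (fun ω => β ω i * β ω j) P)
    (hintg : Integrable (fun ω => ((Z ω).1.2 ⬝ᵥ (m (Matrix.of fun i l => (Z ω).1.1 i l)
        *ᵥ fun i => β ω ⬝ᵥ (Z ω).1.1 i + (Z ω).2 i.castSucc)
      - (β ω ⬝ᵥ (Z ω).1.2 + (Z ω).2 (Fin.last n))) ^ 2) P) :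
    (∫ ω, ((Z ω).1.2 ⬝ᵥ (m (Matrix.of fun i l => (Z ω).1.1 i l)
        *ᵥ fun i => β ω ⬝ᵥ (Z ω).1.1 i + (Z ω).2 i.castSucc)
      - (β ω ⬝ᵥ (Z ω).1.2 + (Z ω).2 (Fin.last n))) ^ 2 ∂P)
      = ∫ z, ((∑ i, ∑ j,
            ((z.1.2 ᵥ* (m (Matrix.of fun i l => z.1.1 i l) * Matrix.of fun i l => z.1.1 i l)
              - z.1.2) i
            * (z.1.2 ᵥ* (m (Matrix.of fun i l => z.1.1 i l) * Matrix.of fun i l => z.1.1 i l)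
              - z.1.2) j * ∫ ω, β ω i * β ω j ∂P))
          + 2 * (z.1.2 ⬝ᵥ (m (Matrix.of fun i l => z.1.1 i l) *ᵥ fun i => z.2 i.castSucc)
              - z.2 (Fin.last n))
            * (∑ i, (z.1.2 ᵥ* (m (Matrix.of fun i l => z.1.1 i l) * Matrix.of fun i l => z.1.1 i l)
              - z.1.2) i * ∫ ω, β ω i ∂P)
          + (z.1.2 ⬝ᵥ (m (Matrix.of fun i l => z.1.1 i l) *ᵥ fun i => z.2 i.castSucc)
              - z.2 (Fin.last n)) ^ 2) ∂(P.map Z) := by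
  classical
  set F : (Fin d → ℝ) × (((Fin n → Fin d → ℝ) × (Fin d → ℝ)) × (Fin (n + 1) → ℝ)) → ℝ :=
    fun p => (p.2.1.2 ⬝ᵥ (m (Matrix.of fun i l => p.2.1.1 i l)
        *ᵥ fun i => p.1 ⬝ᵥ p.2.1.1 i + p.2.2 i.castSucc)
      - (p.1 ⬝ᵥ p.2.1.2 + p.2.2 (Fin.last n))) ^ 2 with hFdef
  -- measurability of F
  have hX : Measurable fun p : (Fin d → ℝ) × (((Fin n → Fin d → ℝ) × (Fin d → ℝ)) × (Fin (n + 1) → ℝ)) =>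
      (Matrix.of fun i l => p.2.1.1 i l : Matrix (Fin n) (Fin d) ℝ) :=
    (measurable_fst.comp measurable_fst).comp measurable_snd
  have hmX : Measurable fun p : (Fin d → ℝ) × (((Fin n → Fin d → ℝ) × (Fin d → ℝ)) × (Fin (n + 1) → ℝ)) =>
      m (Matrix.of fun i l => p.2.1.1 i l) := hm.comp hX
  have hxq2 : Measurable fun p : (Fin d → ℝ) × (((Fin n → Fin d → ℝ) × (Fin d → ℝ)) × (Fin (n + 1) → ℝ)) =>
      p.2.1.2 := (measurable_snd.comp measurable_fst).comp measurable_snd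
  have hε2 : Measurable fun p : (Fin d → ℝ) × (((Fin n → Fin d → ℝ) × (Fin d → ℝ)) × (Fin (n + 1) → ℝ)) =>
      p.2.2 := measurable_snd.comp measurable_snd
  have hg : Measurable fun p : (Fin d → ℝ) × (((Fin n → Fin d → ℝ) × (Fin d → ℝ)) × (Fin (n + 1) → ℝ)) =>
      (fun i => p.1 ⬝ᵥ p.2.1.1 i + p.2.2 i.castSucc) := by
    refine measurable_pi_lambda _ fun i => Measurable.add ?_ (hε2.eval)
    exact my_measurable_dotProduct measurable_fst hX.eval
  have hmv : Measurable fun p : (Fin d → ℝ) × (((Fin n → Fin d → ℝ) × (Fin d → ℝ)) × (Fin (n + 1) → ℝ)) =>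
      (m (Matrix.of fun i l => p.2.1.1 i l)
        *ᵥ fun i => p.1 ⬝ᵥ p.2.1.1 i + p.2.2 i.castSucc) := by
    refine measurable_pi_lambda _ fun j => ?_
    exact my_measurable_dotProduct hmX.eval hg
  have hF : Measurable F := by
    refine Measurable.pow_const ?_ 2
    refine Measurable.sub ?_ (Measurable.add ?_ hε2.eval)
    · exact my_measurable_dotProduct hxq2 hmv
    · exact my_measurable_dotProduct measurable_fst hxq2
  -- pointwise quadratic form
  have hrw : ∀ (b : Fin d → ℝ) (z : ((Fin n → Fin d → ℝ) × (Fin d → ℝ)) × (Fin (n + 1) → ℝ)),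
      F (b, z) = ((z.1.2 ᵥ* (m (Matrix.of fun i l => z.1.1 i l) * Matrix.of fun i l => z.1.1 i l)
          - z.1.2) ⬝ᵥ b
        + (z.1.2 ⬝ᵥ (m (Matrix.of fun i l => z.1.1 i l) *ᵥ fun i => z.2 i.castSucc)
          - z.2 (Fin.last n))) ^ 2 := by
    intro b z
    have h0 : (fun i => b ⬝ᵥ z.1.1 i + z.2 i.castSucc)
        = (Matrix.of fun i l => z.1.1 i l) *ᵥ b + fun i => z.2 i.castSucc := by
      funext i
      simp [Matrix.mulVec, dotProduct, mul_comm]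
    simp only [hFdef]
    rw [h0, mulVec_add, mulVec_mulVec, dotProduct_add, dotProduct_mulVec, sub_dotProduct,
      dotProduct_comm b z.1.2]
    ring
  -- independence and Fubini
  have hpair : Measurable fun ω => (β ω, Z ω) := hβ.prodMk hZ
  have hmapμ : IsProbabilityMeasure (P.map β) := Measure.isProbabilityMeasure_map hβ.aemeasurable
  have hmapν : IsProbabilityMeasure (P.map Z) := Measure.isProbabilityMeasure_map hZ.aemeasurable
  have hprod : P.map (fun ω => (β ω, Z ω)) = (P.map β).prod (P.map Z) :=
    (indepFun_iff_map_prod_eq_prod_map_map hβ.aemeasurable hZ.aemeasurable).mp hind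
  have hFm : AEStronglyMeasurable F (P.map fun ω => (β ω, Z ω)) := hF.aestronglyMeasurable
  have hFint : Integrable F ((P.map β).prod (P.map Z)) := by
    rw [← hprod]
    exact (integrable_map_measure hFm hpair.aemeasurable).mpr hintg
  have hmomμ : ∀ i j, Integrable (fun v : Fin d → ℝ => v i * v j) (P.map β) := fun i j =>
    (integrable_map_measure
      (((measurable_pi_apply i).mul (measurable_pi_apply j)).aestronglyMeasurable)
      hβ.aemeasurable).mpr (hmom i j)
  have mij : ∀ i j, (∫ v : Fin d → ℝ, v i * v j ∂(P.map β)) = ∫ ω, β ω i * β ω j ∂P := fun i j =>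
    integral_map hβ.aemeasurable
      (((measurable_pi_apply i).mul (measurable_pi_apply j)).aestronglyMeasurable)
  have mi : ∀ i, (∫ v : Fin d → ℝ, v i ∂(P.map β)) = ∫ ω, β ω i ∂P := fun i =>
    integral_map hβ.aemeasurable (measurable_pi_apply i).aestronglyMeasurable
  calc (∫ ω, F (β ω, Z ω) ∂P)
      = ∫ p, F p ∂(P.map fun ω => (β ω, Z ω)) := (integral_map hpair.aemeasurable hFm).symm
    _ = ∫ p, F p ∂((P.map β).prod (P.map Z)) := by rw [hprod]
    _ = ∫ z, ∫ b, F (b, z) ∂(P.map β) ∂(P.map Z) := integral_prod_symm F hFint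
    _ = _ := by
        refine integral_congr_ae (Filter.Eventually.of_forall fun z => ?_)
        simp only [hrw]
        rw [quad_integral (P.map β) hmomμ]
        simp only [mij, mi]

/-- For constrained models `M(p_j) = x_jᵀ m(X_j) y_j` (linear in the query and
in the observed labels), with i.i.d. mean-zero variance-`σ²` noise independent of the inputs and
of `β`, the risk `E[(M(p_j) − y_j)²]` computed with `β = β⁽¹⁾` equals the one computed with
`β = β⁽²⁾` whenever `β⁽¹⁾` and `β⁽²⁾` are each independent of the inputs and the noise and have
the same mean and the same covariance matrix: the risk of a constrained model depends on the
distribution of `β` only through its mean and covariance. -/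
theorem constrained_risk_depends_on_two_moments
    {Ω : Type*} [MeasurableSpace Ω] (P : Measure Ω) [IsProbabilityMeasure P]
    {d n : ℕ} (σ : ℝ)
    (x : Fin n → Ω → Fin d → ℝ) (hx : ∀ i, Measurable (x i))
    (xq : Ω → Fin d → ℝ) (hxq : Measurable xq)
    (ε : Fin (n + 1) → Ω → ℝ) (hε : ∀ i, Measurable (ε i))
    (hεiid : iIndepFun ε P)
    (hεlaw : ∀ i i', Measure.map (ε i) P = Measure.map (ε i') P)
    (hεmean : ∀ i, ∫ ω, ε i ω ∂P = 0)
    (hεvar : ∀ i, ∫ ω, (ε i ω) ^ 2 ∂P = σ ^ 2)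
    (hεinputs : IndepFun (fun ω => fun i => ε i ω)
      (fun ω => (fun i => x i ω, xq ω)) P)
    (β₁ β₂ : Ω → Fin d → ℝ) (hβ₁ : Measurable β₁) (hβ₂ : Measurable β₂)
    (hβ₁indep : IndepFun β₁
      (fun ω => ((fun i => x i ω, xq ω), fun i => ε i ω)) P)
    (hβ₂indep : IndepFun β₂
      (fun ω => ((fun i => x i ω, xq ω), fun i => ε i ω)) P)
    (hmean : ∀ i, (∫ ω, β₁ ω i ∂P) = ∫ ω, β₂ ω i ∂P)
    (hsecond : ∀ i j, (∫ ω, β₁ ω i * β₁ ω j ∂P) = ∫ ω, β₂ ω i * β₂ ω j ∂P)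
    (hβ₁mom : ∀ i j, Integrable (fun ω => β₁ ω i * β₁ ω j) P)
    (hβ₂mom : ∀ i j, Integrable (fun ω => β₂ ω i * β₂ ω j) P)
    (m : Matrix (Fin n) (Fin d) ℝ → Matrix (Fin d) (Fin n) ℝ) (hm : Measurable m)
    (hint₁ : Integrable (fun ω =>
      (xq ω ⬝ᵥ (m (Matrix.of fun i l => x i ω l)
          *ᵥ fun i => β₁ ω ⬝ᵥ x i ω + ε i.castSucc ω)
        - (β₁ ω ⬝ᵥ xq ω + ε (Fin.last n) ω)) ^ 2) P)
    (hint₂ : Integrable (fun ω =>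
      (xq ω ⬝ᵥ (m (Matrix.of fun i l => x i ω l)
          *ᵥ fun i => β₂ ω ⬝ᵥ x i ω + ε i.castSucc ω)
        - (β₂ ω ⬝ᵥ xq ω + ε (Fin.last n) ω)) ^ 2) P) :
    (∫ ω, (xq ω ⬝ᵥ (m (Matrix.of fun i l => x i ω l)
            *ᵥ fun i => β₁ ω ⬝ᵥ x i ω + ε i.castSucc ω)
          - (β₁ ω ⬝ᵥ xq ω + ε (Fin.last n) ω)) ^ 2 ∂P)
      = ∫ ω, (xq ω ⬝ᵥ (m (Matrix.of fun i l => x i ω l)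
            *ᵥ fun i => β₂ ω ⬝ᵥ x i ω + ε i.castSucc ω)
          - (β₂ ω ⬝ᵥ xq ω + ε (Fin.last n) ω)) ^ 2 ∂P := by
  have hZ : Measurable fun ω => ((fun i => x i ω, xq ω), fun i => ε i ω) :=
    ((measurable_pi_lambda _ fun i => hx i).prodMk hxq).prodMk
      (measurable_pi_lambda _ fun i => hε i)
  have h₁ := risk_formula P _ hZ m hm β₁ hβ₁ hβ₁indep hβ₁mom (by exact hint₁)
  have h₂ := risk_formula P _ hZ m hm β₂ hβ₂ hβ₂indep hβ₂mom (by exact hint₂)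
  refine Eq.trans (Eq.trans (by exact h₁) ?_) (by exact h₂.symm)
  simp only [hmean, hsecond]
end
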